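/- arXiv:2003.02885 — 6 statements merged into one kernel-verified Lean document; each statement's English description precedes it below -/
import Mathlib

section
/- For the function g_K(x) defined as g_K(x) = [(1/x)·P(Bin(2K,x) ≥ K+1)] / [(1/(1-x))·P(Bin(2K,1-x) ≥ K+1)] on (0,1), g_K is strictly increasing on (0,1) for every integer K ≥ 1. -/
open Finset

/-- The binomial tail probability `P(Bin(n, x) ≥ m) = Σ_{i=m}^{n} C(n,i) x^i (1-x)^{n-i}`. -/
noncomputable def binTail (n m : ℕ) (x : ℝ) : ℝ :=
  ∑ i ∈ Finset.Icc m n, (n.choose i : ℝ) * x ^ i * (1 - x) ^ (n - i)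

/-- The function `g_K(x) = [(1/x)·P(Bin(2K,x) ≥ K+1)] / [(1/(1-x))·P(Bin(2K,1-x) ≥ K+1)]`. -/
noncomputable def gK (K : ℕ) (x : ℝ) : ℝ :=
  ((1 / x) * binTail (2 * K) (K + 1) x) / ((1 / (1 - x)) * binTail (2 * K) (K + 1) (1 - x))

/-! With `F = binTail (2 * K) (K + 1)` we have `g_K(x) = (1 - x) F(x) / (x F(1 - x))` and
`F'(x) = (K + 1) C(2K, K + 1) x^K (1 - x)^(K - 1)`. Hence the numerator of `g_K'(x)` is
`F(1 - x) h(x) + F(x) h(1 - x)`, where `h = gKAux K`. Finally `h > 0` on `(0, 1)`, since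
`h(0) = 0` and `h' = (2K + 1) F > 0`. -/

theorem hasDerivAt_binTail (n m : ℕ) (x : ℝ) :
    HasDerivAt (binTail n m) (m * n.choose m * x ^ (m - 1) * (1 - x) ^ (n - m)) x := by
  set T : ℕ → ℝ := fun j => j * n.choose j * x ^ (j - 1) * (1 - x) ^ (n - j) with hT
  have hterm : ∀ i, HasDerivAt (fun y : ℝ => n.choose i * y ^ i * (1 - y) ^ (n - i))
      (T i - T (i + 1)) x := by
    intro i
    have hpow := ((hasDerivAt_pow i x).const_mul (n.choose i : ℝ)).mul
      (((hasDerivAt_id x).const_sub 1).fun_pow (n - i))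
    refine hpow.congr_deriv ?_
    have hchoose : ((n.choose (i + 1) : ℕ) : ℝ) * (i + 1) = n.choose i * (n - i : ℕ) := by
      exact_mod_cast Nat.choose_succ_right_eq n i
    simp only [hT, Nat.add_sub_cancel, Nat.sub_sub, id]
    push_cast
    linear_combination x ^ i * (1 - x) ^ (n - (i + 1)) * hchoose
  refine (HasDerivAt.fun_sum (u := Icc m n) fun i _ => hterm i).congr_deriv ?_
  rcases le_or_gt m n with hmn | hnm
  · have hlast : T (n + 1) = 0 := by simp [hT]
    have htel := Finset.sum_Icc_sub hmn T
    rw [Finset.sum_sub_distrib] at htel ⊢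
    change _ = T m
    linear_combination -htel - hlast
  · simp [hT, Nat.choose_eq_zero_of_lt hnm, Finset.Icc_eq_empty_of_lt hnm]

theorem binTail_pos {n m : ℕ} (hmn : m ≤ n) {x : ℝ} (hx0 : 0 < x) (hx1 : x < 1) :
    0 < binTail n m x := by
  have h1x : 0 < 1 - x := by linarith
  refine Finset.sum_pos (fun i hi => ?_) ⟨n, Finset.mem_Icc.2 ⟨hmn, le_rfl⟩⟩
  have : (0 : ℝ) < n.choose i := by exact_mod_cast Nat.choose_pos (Finset.mem_Icc.1 hi).2
  positivity

theorem binTail_zero (n : ℕ) {m : ℕ} (hm : 0 < m) : binTail n m 0 = 0 :=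
  Finset.sum_eq_zero fun i hi => by
    rw [zero_pow (by have := (Finset.mem_Icc.1 hi).1; omega)]
    ring

theorem hasDerivAt_binTail_two_mul (K : ℕ) (y : ℝ) :
    HasDerivAt (binTail (2 * K) (K + 1))
      ((K + 1) * (2 * K).choose (K + 1) * y ^ K * (1 - y) ^ (K - 1)) y := by
  convert hasDerivAt_binTail (2 * K) (K + 1) y using 1
  rw [show 2 * K - (K + 1) = K - 1 by omega]
  push_cast
  ring

noncomputable def gKAux (K : ℕ) (y : ℝ) : ℝ :=
  (K + 1) * (2 * K).choose (K + 1) * y ^ (K + 1) * (1 - y) ^ K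
    - (K + 1 - (2 * K + 1) * y) * binTail (2 * K) (K + 1) y

theorem hasDerivAt_gKAux {K : ℕ} (hK : 1 ≤ K) (y : ℝ) :
    HasDerivAt (gKAux K) ((2 * K + 1) * binTail (2 * K) (K + 1) y) y := by
  have hleft := ((hasDerivAt_pow (K + 1) y).const_mul
      ((K + 1) * (2 * K).choose (K + 1) : ℝ)).mul
    (((hasDerivAt_id y).const_sub 1).fun_pow K)
  have hright := (((hasDerivAt_id y).const_mul (2 * K + 1 : ℝ)).const_sub (K + 1 : ℝ)).mul
    (hasDerivAt_binTail_two_mul K y)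
  refine (hleft.sub hright).congr_deriv ?_
  obtain ⟨k, rfl⟩ : ∃ k, K = k + 1 := ⟨K - 1, by omega⟩
  simp only [id, Nat.add_sub_cancel, pow_succ]
  push_cast
  ring

theorem gKAux_pos {K : ℕ} (hK : 1 ≤ K) {x : ℝ} (hx0 : 0 < x) (hx1 : x < 1) :
    0 < gKAux K x := by
  have hmono : StrictMonoOn (gKAux K) (Set.Icc 0 1) := by
    refine strictMonoOn_of_hasDerivWithinAt_pos (convex_Icc 0 1)
      (fun y _ => (hasDerivAt_gKAux hK y).continuousAt.continuousWithinAt)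
      (fun y _ => (hasDerivAt_gKAux hK y).hasDerivWithinAt) fun y hy => ?_
    rw [interior_Icc] at hy
    have := binTail_pos (show K + 1 ≤ 2 * K by omega) hy.1 hy.2
    positivity
  have h0 : gKAux K 0 = 0 := by simp [gKAux, binTail_zero]
  simpa [h0] using hmono (Set.left_mem_Icc.2 zero_le_one) ⟨hx0.le, hx1.le⟩ hx0

theorem gK_eq (K : ℕ) :
    gK K = fun x =>
      (1 - x) * binTail (2 * K) (K + 1) x / (x * binTail (2 * K) (K + 1) (1 - x)) := by
  funext x
  simp only [gK, div_eq_mul_inv, mul_inv, inv_inv]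
  ring

theorem hasDerivAt_gK {K : ℕ} (hK : 1 ≤ K) {x : ℝ} (hx0 : 0 < x) (hx1 : x < 1) :
    HasDerivAt (gK K)
      ((binTail (2 * K) (K + 1) (1 - x) * gKAux K x + binTail (2 * K) (K + 1) x * gKAux K (1 - x))
        / (x * binTail (2 * K) (K + 1) (1 - x)) ^ 2) x := by
  have hnum := ((hasDerivAt_id x).const_sub 1).mul (hasDerivAt_binTail_two_mul K x)
  have hden := (hasDerivAt_id x).mul
    ((hasDerivAt_binTail_two_mul K (1 - x)).comp x ((hasDerivAt_id x).const_sub 1))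
  have hden_ne : x * binTail (2 * K) (K + 1) (1 - x) ≠ 0 :=
    (mul_pos hx0 (binTail_pos (by omega) (by linarith) (by linarith))).ne'
  rw [gK_eq]
  refine (hnum.div hden hden_ne).congr_deriv ?_
  obtain ⟨k, rfl⟩ : ∃ k, K = k + 1 := ⟨K - 1, by omega⟩
  simp only [gKAux, Pi.mul_apply, id, Function.comp_apply, sub_sub_cancel, Nat.add_sub_cancel,
    pow_succ]
  push_cast
  congr 1
  ring

/-- For every integer `K ≥ 1`, the function `g_K` is strictly increasing on `(0,1)`. -/
theorem stmt_2 (K : ℕ) (hK : 1 ≤ K) :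
    StrictMonoOn (gK K) (Set.Ioo (0 : ℝ) 1) := by
  refine strictMonoOn_of_deriv_pos (convex_Ioo 0 1)
    (fun x hx => (hasDerivAt_gK hK hx.1 hx.2).continuousAt.continuousWithinAt) fun x hx => ?_
  obtain ⟨hx0, hx1⟩ : x ∈ Set.Ioo 0 1 := by rwa [interior_Ioo] at hx
  have hx1' : 0 < 1 - x := sub_pos.2 hx1
  have hx0' : 1 - x < 1 := sub_lt_self 1 hx0
  have hF := binTail_pos (show K + 1 ≤ 2 * K by omega) hx0 hx1
  have hFrefl := binTail_pos (show K + 1 ≤ 2 * K by omega) hx1' hx0'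
  have hh := gKAux_pos hK hx0 hx1
  have hhrefl := gKAux_pos hK hx1' hx0'
  rw [(hasDerivAt_gK hK hx0 hx1).deriv]
  positivity
end

section
/- The rational function φ(t) = [Σ_{i=K+1}^{2K} C(2K,i) t^i] / [Σ_{i=1}^{K} C(2K,i-1) t^i] is strictly increasing on (0,∞) for every integer K ≥ 1. -/
open Finset

/-- The rational function `φ(t) = [Σ_{i=K+1}^{2K} C(2K,i) t^i] / [Σ_{i=1}^{K} C(2K,i-1) t^i]`. -/
noncomputable def phiK (K : ℕ) (t : ℝ) : ℝ :=
  (∑ i ∈ Finset.Icc (K + 1) (2 * K), ((2 * K).choose i : ℝ) * t ^ i) /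
    (∑ i ∈ Finset.Icc 1 K, ((2 * K).choose (i - 1) : ℝ) * t ^ i)

/-- For every integer `K ≥ 1`, `φ` is strictly increasing on `(0,∞)`. -/
theorem stmt_3 (K : ℕ) (hK : 1 ≤ K) :
    StrictMonoOn (phiK K) (Set.Ioi (0 : ℝ)) := by
  intro x hx y hy hxy
  simp only [Set.mem_Ioi] at hx hy
  have hne : (Finset.Icc 1 K).Nonempty := ⟨1, by simp [hK]⟩
  have hD : ∀ t : ℝ, 0 < t →
      0 < ∑ i ∈ Finset.Icc 1 K, ((2 * K).choose (i - 1) : ℝ) * t ^ i := by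
    intro t ht
    apply Finset.sum_pos _ hne
    intro i hi
    simp only [Finset.mem_Icc] at hi
    have h1 : i - 1 ≤ 2 * K := by omega
    have h2 : 0 < ((2 * K).choose (i - 1) : ℝ) := by
      exact_mod_cast Nat.choose_pos h1
    exact mul_pos h2 (pow_pos ht i)
  unfold phiK
  rw [div_lt_div_iff₀ (hD x hx) (hD y hy), Finset.sum_mul_sum, Finset.sum_mul_sum]
  apply Finset.sum_lt_sum_of_nonempty
  · exact ⟨K + 1, by simp; omega⟩
  intro i hi
  apply Finset.sum_lt_sum_of_nonempty hne
  intro j hj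
  simp only [Finset.mem_Icc] at hi hj
  have hij : j < i := by omega
  have ha : 0 < ((2 * K).choose i : ℝ) := by
    exact_mod_cast Nat.choose_pos (by omega : i ≤ 2 * K)
  have hb : 0 < ((2 * K).choose (j - 1) : ℝ) := by
    exact_mod_cast Nat.choose_pos (by omega : j - 1 ≤ 2 * K)
  have key : x ^ i * y ^ j < y ^ i * x ^ j := by
    have h1 : i = (i - j) + j := by omega
    rw [h1, pow_add, pow_add]
    have hp : x ^ (i - j) < y ^ (i - j) :=
      pow_lt_pow_left₀ hxy hx.le (by omega : i - j ≠ 0)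
    have hxj := pow_pos hx j
    have hyj := pow_pos hy j
    nlinarith [mul_lt_mul_of_pos_right hp (mul_pos hxj hyj)]
  nlinarith [mul_lt_mul_of_pos_left key (mul_pos ha hb)]
end

section
/- For the birth–death chain with jump probabilities governed by a strictly increasing function g and bias parameter r, with β = g^{-1}(r): if α > β then the absorption probability at N starting from ⌊αN⌋ converges to 1 as N → ∞, and if α < β it converges to 0; moreover the convergence is exponentially fast in N. -/
open Finset Filter

private lemma icc_one_eq_ioc (a : ℕ) : Finset.Icc 1 a = Finset.Ioc 0 a := by
  ext x; simp [Finset.mem_Icc, Finset.mem_Ioc, Nat.lt_iff_add_one_le]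

private lemma geom_tail_le {ρ : ℝ} (hρ0 : 0 ≤ ρ) (hρ1 : ρ < 1) (n : ℕ) :
    ∑ k ∈ Finset.range n, ρ ^ k ≤ (1 - ρ)⁻¹ := by
  have h := Summable.sum_le_tsum (Finset.range n) (fun i _ => pow_nonneg hρ0 i)
    (summable_geometric_of_lt_one hρ0 hρ1)
  rwa [tsum_geometric_of_lt_one hρ0 hρ1] at h

private lemma prod_le_prod_mul_pow {f : ℕ → ℝ} {ρ : ℝ} {t₁ t : ℕ} (h : t₁ ≤ t)
    (hP : 0 ≤ ∏ j ∈ Finset.Icc 1 t₁, f j)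
    (hf : ∀ j, t₁ < j → j ≤ t → 0 ≤ f j ∧ f j ≤ ρ) :
    ∏ j ∈ Finset.Icc 1 t, f j ≤ (∏ j ∈ Finset.Icc 1 t₁, f j) * ρ ^ (t - t₁) := by
  rw [icc_one_eq_ioc] at hP ⊢
  rw [icc_one_eq_ioc, ← Finset.prod_Ioc_consecutive f (Nat.zero_le t₁) h]
  refine mul_le_mul_of_nonneg_left ?_ hP
  calc ∏ j ∈ Finset.Ioc t₁ t, f j
      ≤ ∏ _j ∈ Finset.Ioc t₁ t, ρ :=
        Finset.prod_le_prod
          (fun j hj => (hf j (Finset.mem_Ioc.1 hj).1 (Finset.mem_Ioc.1 hj).2).1)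
          (fun j hj => (hf j (Finset.mem_Ioc.1 hj).1 (Finset.mem_Ioc.1 hj).2).2)
    _ = ρ ^ (t - t₁) := by rw [Finset.prod_const, Nat.card_Ioc]

private lemma pow_mul_prod_le {f : ℕ → ℝ} {σ : ℝ} (hσ : 0 ≤ σ) {t t₂ : ℕ} (h : t ≤ t₂)
    (hP : 0 ≤ ∏ j ∈ Finset.Icc 1 t, f j)
    (hf : ∀ j, t < j → j ≤ t₂ → σ ≤ f j) :
    (∏ j ∈ Finset.Icc 1 t, f j) * σ ^ (t₂ - t) ≤ ∏ j ∈ Finset.Icc 1 t₂, f j := by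
  rw [icc_one_eq_ioc] at hP ⊢
  rw [icc_one_eq_ioc, ← Finset.prod_Ioc_consecutive f (Nat.zero_le t) h]
  refine mul_le_mul_of_nonneg_left ?_ hP
  calc σ ^ (t₂ - t) = ∏ _j ∈ Finset.Ioc t t₂, σ := by rw [Finset.prod_const, Nat.card_Ioc]
    _ ≤ ∏ j ∈ Finset.Ioc t t₂, f j :=
        Finset.prod_le_prod (fun j _ => hσ)
          (fun j hj => hf j (Finset.mem_Ioc.1 hj).1 (Finset.mem_Ioc.1 hj).2)

private lemma main_upper (P : ℕ → ℝ) (N m t₁ : ℕ) (ρ : ℝ) (hρ0 : 0 < ρ) (hρ1 : ρ < 1)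
    (ht₁m : t₁ ≤ m) (hmN : m ≤ N) (ht₁N : t₁ < N)
    (hPpos : ∀ t, t < N → 0 < P t)
    (hratio : ∀ t, m ≤ t → t < N → P t ≤ P t₁ * ρ ^ (t - t₁)) :
    |(∑ t ∈ Finset.range m, P t) / (∑ t ∈ Finset.range N, P t) - 1|
      ≤ ρ ^ (m - t₁) * (1 - ρ)⁻¹ := by
  set Sm := ∑ t ∈ Finset.range m, P t with hSm
  set SN := ∑ t ∈ Finset.range N, P t with hSN
  have hSN_ge : P t₁ ≤ SN :=
    Finset.single_le_sum (fun t ht => (hPpos t (Finset.mem_range.1 ht)).le)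
      (Finset.mem_range.2 ht₁N)
  have hSNpos : 0 < SN := lt_of_lt_of_le (hPpos t₁ ht₁N) hSN_ge
  have hSmSN : Sm ≤ SN :=
    Finset.sum_le_sum_of_subset_of_nonneg (Finset.range_subset_range.2 hmN)
      (fun t ht _ => (hPpos t (Finset.mem_range.1 ht)).le)
  have habs : |Sm / SN - 1| = (SN - Sm) / SN := by
    rw [abs_sub_comm, abs_of_nonneg (by
      rw [sub_nonneg]; exact (div_le_one hSNpos).2 hSmSN), one_sub_div hSNpos.ne']
  rw [habs]
  have hdiff : SN - Sm = ∑ t ∈ Finset.Ico m N, P t := (Finset.sum_Ico_eq_sub P hmN).symm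
  have htail : ∑ t ∈ Finset.Ico m N, P t ≤ P t₁ * (ρ ^ (m - t₁) * (1 - ρ)⁻¹) := by
    calc ∑ t ∈ Finset.Ico m N, P t
        ≤ ∑ t ∈ Finset.Ico m N, P t₁ * ρ ^ (t - t₁) :=
          Finset.sum_le_sum fun t ht =>
            hratio t (Finset.mem_Ico.1 ht).1 (Finset.mem_Ico.1 ht).2
      _ = P t₁ * ∑ t ∈ Finset.Ico m N, ρ ^ (t - t₁) := by rw [← Finset.mul_sum]
      _ ≤ P t₁ * (ρ ^ (m - t₁) * (1 - ρ)⁻¹) := by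
          refine mul_le_mul_of_nonneg_left ?_ (hPpos t₁ ht₁N).le
          have he : ∀ t ∈ Finset.Ico m N, ρ ^ (t - t₁) = ρ ^ (m - t₁) * ρ ^ (t - m) := by
            intro t ht
            rw [← pow_add]
            congr 1
            have := (Finset.mem_Ico.1 ht).1
            omega
          rw [Finset.sum_congr rfl he, ← Finset.mul_sum]
          refine mul_le_mul_of_nonneg_left ?_ (pow_nonneg hρ0.le _)
          rw [Finset.sum_Ico_eq_sum_range]
          simp only [add_tsub_cancel_left]
          exact geom_tail_le hρ0.le hρ1 _
  rw [hdiff, div_le_iff₀ hSNpos]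
  have hX : (0:ℝ) ≤ ρ ^ (m - t₁) * (1 - ρ)⁻¹ := by
    apply mul_nonneg (pow_nonneg hρ0.le _)
    rw [inv_nonneg]; linarith
  calc ∑ t ∈ Finset.Ico m N, P t ≤ P t₁ * (ρ ^ (m - t₁) * (1 - ρ)⁻¹) := htail
    _ ≤ SN * (ρ ^ (m - t₁) * (1 - ρ)⁻¹) := mul_le_mul_of_nonneg_right hSN_ge hX
    _ = ρ ^ (m - t₁) * (1 - ρ)⁻¹ * SN := by ring

private lemma main_lower (P : ℕ → ℝ) (N m t₂ : ℕ) (τ : ℝ) (hτ0 : 0 < τ) (hτ1 : τ < 1)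
    (hm : 1 ≤ m) (hmt₂ : m ≤ t₂) (ht₂N : t₂ < N)
    (hPpos : ∀ t, t < N → 0 < P t)
    (hratio : ∀ t, t < m → P t ≤ P t₂ * τ ^ (t₂ - t)) :
    |(∑ t ∈ Finset.range m, P t) / (∑ t ∈ Finset.range N, P t)|
      ≤ τ ^ (t₂ + 1 - m) * (1 - τ)⁻¹ := by
  set Sm := ∑ t ∈ Finset.range m, P t with hSm
  set SN := ∑ t ∈ Finset.range N, P t with hSN
  have hSN_ge : P t₂ ≤ SN :=
    Finset.single_le_sum (fun t ht => (hPpos t (Finset.mem_range.1 ht)).le)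
      (Finset.mem_range.2 ht₂N)
  have hSNpos : 0 < SN := lt_of_lt_of_le (hPpos t₂ ht₂N) hSN_ge
  have hSmnn : 0 ≤ Sm :=
    Finset.sum_nonneg fun t ht => (hPpos t (lt_of_lt_of_le (Finset.mem_range.1 ht)
      (le_trans hmt₂ ht₂N.le))).le
  rw [abs_of_nonneg (div_nonneg hSmnn hSNpos.le)]
  have hbound : Sm ≤ P t₂ * (τ ^ (t₂ + 1 - m) * (1 - τ)⁻¹) := by
    calc Sm ≤ ∑ t ∈ Finset.range m, P t₂ * τ ^ (t₂ - t) :=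
          Finset.sum_le_sum fun t ht => hratio t (Finset.mem_range.1 ht)
      _ = P t₂ * ∑ t ∈ Finset.range m, τ ^ (t₂ - t) := by rw [← Finset.mul_sum]
      _ ≤ P t₂ * (τ ^ (t₂ + 1 - m) * (1 - τ)⁻¹) := by
          refine mul_le_mul_of_nonneg_left ?_
            (hPpos t₂ ht₂N).le
          have he : ∀ t ∈ Finset.range m, τ ^ (t₂ - t)
              = τ ^ (t₂ + 1 - m) * τ ^ (m - 1 - t) := by
            intro t ht
            rw [← pow_add]
            congr 1
            have := Finset.mem_range.1 ht
            omega
          rw [Finset.sum_congr rfl he, ← Finset.mul_sum]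
          refine mul_le_mul_of_nonneg_left ?_ (pow_nonneg hτ0.le _)
          rw [Finset.sum_range_reflect (fun k => τ ^ k) m]
          exact geom_tail_le hτ0.le hτ1 _
  rw [div_le_iff₀ hSNpos]
  have hX : (0:ℝ) ≤ τ ^ (t₂ + 1 - m) * (1 - τ)⁻¹ := by
    apply mul_nonneg (pow_nonneg hτ0.le _)
    rw [inv_nonneg]; linarith
  calc Sm ≤ P t₂ * (τ ^ (t₂ + 1 - m) * (1 - τ)⁻¹) := hbound
    _ ≤ SN * (τ ^ (t₂ + 1 - m) * (1 - τ)⁻¹) := mul_le_mul_of_nonneg_right hSN_ge hX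
    _ = τ ^ (t₂ + 1 - m) * (1 - τ)⁻¹ * SN := by ring

set_option maxHeartbeats 2000000 in
/-- Phase transition of the exit probability for the birth–death chain governed by a
strictly increasing function `g` and bias parameter `r`, with `β = g⁻¹(r)`: the
absorption probability at `N` starting from `⌊αN⌋`, given explicitly by
`E_N = [Σ_{t=0}^{⌊αN⌋-1} Π_{j=1}^{t} r/g(j/N)] / [Σ_{t=0}^{N-1} Π_{j=1}^{t} r/g(j/N)]`,
converges to `1` if `α > β` and to `0` if `α < β`, exponentially fast in `N`. -/
theorem stmt_7 (g : ℝ → ℝ) (r : ℝ) (hr : 0 < r)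
    (hg_pos : ∀ x ∈ Set.Ioo (0 : ℝ) 1, 0 < g x)
    (hg_mono : StrictMonoOn g (Set.Ioo (0 : ℝ) 1))
    (hg_cont : ContinuousOn g (Set.Ioo (0 : ℝ) 1))
    (β : ℝ) (hβ : β ∈ Set.Ioo (0 : ℝ) 1) (hgβ : g β = r)
    (α : ℝ) (hα : α ∈ Set.Ioo (0 : ℝ) 1)
    (E : ℕ → ℝ)
    (hE : ∀ N : ℕ, E N =
      (∑ t ∈ Finset.range ⌊α * N⌋₊, ∏ j ∈ Finset.Icc 1 t, r / g (j / N)) /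
        (∑ t ∈ Finset.range N, ∏ j ∈ Finset.Icc 1 t, r / g (j / N))) :
    (α > β → Tendsto E atTop (nhds 1) ∧
      ∃ C > (0 : ℝ), ∃ c ∈ Set.Ioo (0 : ℝ) 1, ∀ᶠ N : ℕ in atTop, |E N - 1| ≤ C * c ^ N) ∧
    (α < β → Tendsto E atTop (nhds 0) ∧
      ∃ C > (0 : ℝ), ∃ c ∈ Set.Ioo (0 : ℝ) 1, ∀ᶠ N : ℕ in atTop, |E N| ≤ C * c ^ N) := by
  obtain ⟨hβ0, hβ1⟩ := hβ
  obtain ⟨hα0, hα1⟩ := hα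
  constructor
  · -- case α > β
    intro hab
    set γ := (α + β) / 2 with hγdef
    have hβγ : β < γ := by rw [hγdef]; linarith
    have hγα : γ < α := by rw [hγdef]; linarith
    have hγ0 : 0 < γ := by linarith
    have hγ1 : γ < 1 := by linarith
    have hgγ : 0 < g γ := hg_pos γ ⟨hγ0, hγ1⟩
    have hrlt : r < g γ := by
      have := hg_mono ⟨hβ0, hβ1⟩ ⟨hγ0, hγ1⟩ hβγ
      rwa [hgβ] at this
    set ρ := r / g γ with hρdef
    have hρ0 : 0 < ρ := div_pos hr hgγ
    have hρ1 : ρ < 1 := (div_lt_one hgγ).2 hrlt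
    set δ := α - γ with hδdef
    have hδ0 : 0 < δ := by rw [hδdef]; linarith
    set c := ρ ^ δ with hcdef
    have hc0 : 0 < c := Real.rpow_pos_of_pos hρ0 δ
    have hc1 : c < 1 := Real.rpow_lt_one hρ0.le hρ1 hδ0
    set C := ρ ^ (-2 : ℝ) / (1 - ρ) with hCdef
    have hC0 : 0 < C := div_pos (Real.rpow_pos_of_pos hρ0 _) (by linarith)
    have key : ∀ᶠ N : ℕ in atTop, |E N - 1| ≤ C * c ^ N := by
      rw [eventually_atTop]
      refine ⟨⌈3 / δ⌉₊ + 1, fun N hN => ?_⟩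
      have hN0 : 0 < N := lt_of_lt_of_le (Nat.succ_pos _) hN
      have hx0 : (0 : ℝ) < N := by exact_mod_cast hN0
      have hδN : 3 ≤ δ * N := by
        have h1 : ((⌈3 / δ⌉₊ : ℕ) : ℝ) + 1 ≤ N := by exact_mod_cast hN
        have h2 : 3 / δ ≤ ((⌈3 / δ⌉₊ : ℕ) : ℝ) := Nat.le_ceil _
        have h3 : 3 / δ ≤ (N : ℝ) := by linarith
        calc (3:ℝ) = δ * (3 / δ) := by field_simp
          _ ≤ δ * N := mul_le_mul_of_nonneg_left h3 hδ0.le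
      set m := ⌊α * N⌋₊ with hmdef
      set t₁ := ⌈γ * N⌉₊ with ht₁def
      have hmle : (m : ℝ) ≤ α * N := Nat.floor_le (by positivity)
      have hmgt : α * N - 1 < m := by
        have := Nat.lt_floor_add_one (α * (N:ℝ)); linarith
      have ht₁ge : γ * N ≤ t₁ := Nat.le_ceil _
      have ht₁lt : (t₁ : ℝ) < γ * N + 1 := Nat.ceil_lt_add_one (by positivity)
      have ht₁m : t₁ < m := by
        have h : (t₁ : ℝ) < m := by
          have : δ * N = α * N - γ * N := by rw [hδdef]; ring
          linarith
        exact_mod_cast h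
      have hmN : m < N := by
        have h : (m : ℝ) < N := by nlinarith
        exact_mod_cast h
      -- positivity of factors
      have hfpos : ∀ j : ℕ, 1 ≤ j → j < N → 0 < r / g ((j : ℝ) / N) := by
        intro j h1 h2
        refine div_pos hr (hg_pos _ ⟨?_, ?_⟩)
        · have : (0:ℝ) < j := by exact_mod_cast h1
          positivity
        · rw [div_lt_one hx0]; exact_mod_cast h2
      have hPpos : ∀ t, t < N → 0 < ∏ j ∈ Finset.Icc 1 t, r / g ((j : ℝ) / N) := by
        intro t ht
        refine Finset.prod_pos fun j hj => ?_
        have hj' := Finset.mem_Icc.1 hj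
        exact hfpos j hj'.1 (lt_of_le_of_lt hj'.2 ht)
      have hfle : ∀ j : ℕ, t₁ < j → j < N → r / g ((j : ℝ) / N) ≤ ρ := by
        intro j hj1 hj2
        have hjge : (t₁ : ℝ) + 1 ≤ j := by exact_mod_cast hj1
        have hjγ : γ < (j : ℝ) / N := by
          rw [lt_div_iff₀ hx0]; linarith
        have hmem : (j : ℝ) / N ∈ Set.Ioo (0:ℝ) 1 :=
          ⟨lt_trans hγ0 hjγ, by rw [div_lt_one hx0]; exact_mod_cast hj2⟩
        have hg' : g γ < g ((j : ℝ) / N) := hg_mono ⟨hγ0, hγ1⟩ hmem hjγ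
        rw [hρdef, div_le_div_iff₀ (hg_pos _ hmem) hgγ]
        nlinarith
      have hratio : ∀ t, m ≤ t → t < N →
          (∏ j ∈ Finset.Icc 1 t, r / g ((j : ℝ) / N))
            ≤ (∏ j ∈ Finset.Icc 1 t₁, r / g ((j : ℝ) / N)) * ρ ^ (t - t₁) := by
        intro t ht htN
        refine prod_le_prod_mul_pow (le_trans ht₁m.le ht)
          (hPpos t₁ (lt_trans ht₁m hmN)).le ?_
        intro j hj1 hj2
        exact ⟨(hfpos j (by omega) (by omega)).le, hfle j hj1 (by omega)⟩
      have hmain := main_upper (fun t => ∏ j ∈ Finset.Icc 1 t, r / g ((j : ℝ) / N))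
        N m t₁ ρ hρ0 hρ1 ht₁m.le hmN.le (lt_trans ht₁m hmN) hPpos hratio
      rw [hE N]
      refine le_trans hmain ?_
      -- now: ρ ^ (m - t₁) * (1-ρ)⁻¹ ≤ C * c ^ N
      have hk : δ * N - 2 ≤ ((m - t₁ : ℕ) : ℝ) := by
        rw [Nat.cast_sub ht₁m.le]
        have : δ * N = α * N - γ * N := by rw [hδdef]; ring
        linarith
      have hcN : c ^ N = ρ ^ (δ * (N : ℝ)) := by
        rw [hcdef, ← Real.rpow_natCast (ρ ^ δ) N, ← Real.rpow_mul hρ0.le]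
      have hpow : ρ ^ (m - t₁) ≤ ρ ^ (-2 : ℝ) * c ^ N := by
        calc ρ ^ (m - t₁) = ρ ^ (((m - t₁ : ℕ) : ℝ)) := (Real.rpow_natCast ρ _).symm
          _ ≤ ρ ^ (δ * (N : ℝ) - 2) :=
              Real.rpow_le_rpow_of_exponent_ge hρ0 hρ1.le hk
          _ = ρ ^ (-2 : ℝ) * ρ ^ (δ * (N : ℝ)) := by
              rw [show δ * (N : ℝ) - 2 = (-2) + δ * N by ring, Real.rpow_add hρ0]
          _ = ρ ^ (-2 : ℝ) * c ^ N := by rw [hcN]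
      have hCc : C * c ^ N = (ρ ^ (-2 : ℝ) * c ^ N) * (1 - ρ)⁻¹ := by
        rw [hCdef]; ring
      rw [hCc]
      refine mul_le_mul_of_nonneg_right hpow ?_
      rw [inv_nonneg]; linarith
    refine ⟨?_, C, hC0, c, ⟨hc0, hc1⟩, key⟩
    have h1 : Tendsto (fun N : ℕ => C * c ^ N) atTop (nhds 0) := by
      have := (tendsto_pow_atTop_nhds_zero_of_lt_one hc0.le hc1).const_mul C
      simpa using this
    rw [tendsto_iff_norm_sub_tendsto_zero]
    refine squeeze_zero' (Eventually.of_forall fun N => norm_nonneg _) ?_ h1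
    simpa [Real.norm_eq_abs] using key
  · -- case α < β
    intro hab
    set γ := (α + β) / 2 with hγdef
    have hαγ : α < γ := by rw [hγdef]; linarith
    have hγβ : γ < β := by rw [hγdef]; linarith
    have hγ0 : 0 < γ := by linarith
    have hγ1 : γ < 1 := by linarith
    have hgγ : 0 < g γ := hg_pos γ ⟨hγ0, hγ1⟩
    have hltr : g γ < r := by
      have := hg_mono ⟨hγ0, hγ1⟩ ⟨hβ0, hβ1⟩ hγβ
      rwa [hgβ] at this
    set σ := r / g γ with hσdef
    set τ := g γ / r with hτdef
    have hτ0 : 0 < τ := div_pos hgγ hr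
    have hτ1 : τ < 1 := (div_lt_one hr).2 hltr
    have hστ : σ * τ = 1 := by
      rw [hσdef, hτdef]; field_simp
    set δ := γ - α with hδdef
    have hδ0 : 0 < δ := by rw [hδdef]; linarith
    set c := τ ^ δ with hcdef
    have hc0 : 0 < c := Real.rpow_pos_of_pos hτ0 δ
    have hc1 : c < 1 := Real.rpow_lt_one hτ0.le hτ1 hδ0
    set C := (1 - τ)⁻¹ with hCdef
    have hC0 : 0 < C := by rw [hCdef]; rw [inv_pos]; linarith
    have key : ∀ᶠ N : ℕ in atTop, |E N| ≤ C * c ^ N := by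
      rw [eventually_atTop]
      refine ⟨⌈3 / δ⌉₊ + ⌈1 / α⌉₊ + 1, fun N hN => ?_⟩
      have hN0 : 0 < N := by omega
      have hx0 : (0 : ℝ) < N := by exact_mod_cast hN0
      have hNcast : ((⌈3 / δ⌉₊ : ℕ) : ℝ) + ((⌈1 / α⌉₊ : ℕ) : ℝ) + 1 ≤ N := by
        exact_mod_cast hN
      have hδN : 3 ≤ δ * N := by
        have h2 : 3 / δ ≤ ((⌈3 / δ⌉₊ : ℕ) : ℝ) := Nat.le_ceil _
        have h3 : 3 / δ ≤ (N : ℝ) := by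
          have : (0:ℝ) ≤ ((⌈1 / α⌉₊ : ℕ) : ℝ) := Nat.cast_nonneg _
          linarith
        calc (3:ℝ) = δ * (3 / δ) := by field_simp
          _ ≤ δ * N := mul_le_mul_of_nonneg_left h3 hδ0.le
      have hαN : 1 ≤ α * N := by
        have h2 : 1 / α ≤ ((⌈1 / α⌉₊ : ℕ) : ℝ) := Nat.le_ceil _
        have h3 : 1 / α ≤ (N : ℝ) := by
          have : (0:ℝ) ≤ ((⌈3 / δ⌉₊ : ℕ) : ℝ) := Nat.cast_nonneg _
          linarith
        calc (1:ℝ) = α * (1 / α) := by field_simp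
          _ ≤ α * N := mul_le_mul_of_nonneg_left h3 hα0.le
      set m := ⌊α * N⌋₊ with hmdef
      set t₂ := ⌊γ * N⌋₊ with ht₂def
      have hmle : (m : ℝ) ≤ α * N := Nat.floor_le (by positivity)
      have hm1 : 1 ≤ m := Nat.le_floor (by exact_mod_cast hαN)
      have ht₂le : (t₂ : ℝ) ≤ γ * N := Nat.floor_le (by positivity)
      have ht₂gt : γ * N - 1 < t₂ := by
        have := Nat.lt_floor_add_one (γ * (N:ℝ)); linarith
      have hmt₂ : m < t₂ := by
        have h : (m : ℝ) < t₂ := by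
          have : δ * N = γ * N - α * N := by rw [hδdef]; ring
          linarith
        exact_mod_cast h
      have ht₂N : t₂ < N := by
        have h : (t₂ : ℝ) < N := by nlinarith
        exact_mod_cast h
      have hfpos : ∀ j : ℕ, 1 ≤ j → j < N → 0 < r / g ((j : ℝ) / N) := by
        intro j h1 h2
        refine div_pos hr (hg_pos _ ⟨?_, ?_⟩)
        · have : (0:ℝ) < j := by exact_mod_cast h1
          positivity
        · rw [div_lt_one hx0]; exact_mod_cast h2
      have hPpos : ∀ t, t < N → 0 < ∏ j ∈ Finset.Icc 1 t, r / g ((j : ℝ) / N) := by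
        intro t ht
        refine Finset.prod_pos fun j hj => ?_
        have hj' := Finset.mem_Icc.1 hj
        exact hfpos j hj'.1 (lt_of_le_of_lt hj'.2 ht)
      have hfge : ∀ j : ℕ, 1 ≤ j → j ≤ t₂ → σ ≤ r / g ((j : ℝ) / N) := by
        intro j hj1 hj2
        have hjle : (j : ℝ) ≤ t₂ := by exact_mod_cast hj2
        have hjγ : (j : ℝ) / N ≤ γ := by
          rw [div_le_iff₀ hx0]; linarith
        have hmem : (j : ℝ) / N ∈ Set.Ioo (0:ℝ) 1 := by
          constructor
          · have : (0:ℝ) < j := by exact_mod_cast hj1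
            positivity
          · rw [div_lt_one hx0]
            have : (j:ℝ) ≤ t₂ := hjle
            have h2 : (t₂:ℝ) < N := by exact_mod_cast ht₂N
            linarith
        have hg' : g ((j : ℝ) / N) ≤ g γ :=
          hg_mono.monotoneOn hmem ⟨hγ0, hγ1⟩ hjγ
        rw [hσdef, div_le_div_iff₀ hgγ (hg_pos _ hmem)]
        nlinarith [hg_pos _ hmem]
      have hratio : ∀ t, t < m →
          (∏ j ∈ Finset.Icc 1 t, r / g ((j : ℝ) / N))
            ≤ (∏ j ∈ Finset.Icc 1 t₂, r / g ((j : ℝ) / N)) * τ ^ (t₂ - t) := by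
        intro t ht
        have htt₂ : t ≤ t₂ := by omega
        have hσ0 : (0:ℝ) ≤ σ := by
          rw [hσdef]; positivity
        have hlow := pow_mul_prod_le hσ0 htt₂
          (hPpos t (by omega)).le
          (fun j hj1 hj2 => hfge j (by omega) hj2)
        have hone : σ ^ (t₂ - t) * τ ^ (t₂ - t) = 1 := by
          rw [← mul_pow, hστ, one_pow]
        calc (∏ j ∈ Finset.Icc 1 t, r / g ((j : ℝ) / N))
            = (∏ j ∈ Finset.Icc 1 t, r / g ((j : ℝ) / N)) * (σ ^ (t₂ - t) * τ ^ (t₂ - t)) := by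
              rw [hone, mul_one]
          _ = ((∏ j ∈ Finset.Icc 1 t, r / g ((j : ℝ) / N)) * σ ^ (t₂ - t)) * τ ^ (t₂ - t) := by
              ring
          _ ≤ (∏ j ∈ Finset.Icc 1 t₂, r / g ((j : ℝ) / N)) * τ ^ (t₂ - t) :=
              mul_le_mul_of_nonneg_right hlow (pow_nonneg hτ0.le _)
      have hmain := main_lower (fun t => ∏ j ∈ Finset.Icc 1 t, r / g ((j : ℝ) / N))
        N m t₂ τ hτ0 hτ1 hm1 hmt₂.le ht₂N hPpos hratio
      rw [hE N]
      refine le_trans hmain ?_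
      have hk : δ * N ≤ ((t₂ + 1 - m : ℕ) : ℝ) := by
        rw [Nat.cast_sub (by omega)]
        push_cast
        have : δ * N = γ * N - α * N := by rw [hδdef]; ring
        linarith
      have hcN : c ^ N = τ ^ (δ * (N : ℝ)) := by
        rw [hcdef, ← Real.rpow_natCast (τ ^ δ) N, ← Real.rpow_mul hτ0.le]
      have hpow : τ ^ (t₂ + 1 - m) ≤ c ^ N := by
        calc τ ^ (t₂ + 1 - m) = τ ^ (((t₂ + 1 - m : ℕ) : ℝ)) := (Real.rpow_natCast τ _).symm
          _ ≤ τ ^ (δ * (N : ℝ)) :=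
              Real.rpow_le_rpow_of_exponent_ge hτ0 hτ1.le hk
          _ = c ^ N := hcN.symm
      have hCc : C * c ^ N = c ^ N * (1 - τ)⁻¹ := by rw [hCdef]; ring
      rw [hCc]
      refine mul_le_mul_of_nonneg_right hpow ?_
      rw [inv_nonneg]; linarith
    refine ⟨?_, C, hC0, c, ⟨hc0, hc1⟩, key⟩
    have h1 : Tendsto (fun N : ℕ => C * c ^ N) atTop (nhds 0) := by
      have := (tendsto_pow_atTop_nhds_zero_of_lt_one hc0.le hc1).const_mul C
      simpa using this
    rw [tendsto_iff_norm_sub_tendsto_zero]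
    refine squeeze_zero' (Eventually.of_forall fun N => norm_nonneg _) ?_ h1
    simpa [Real.norm_eq_abs] using key
end

section
/- For the conditioned-on-absorption-at-N gambler's ruin chain with right-jump probability p > 1/2 and r = (1-p)/p, the expected number of left-jumps from state k before absorption, starting from x ≤ k ≤ N-1, equals r(1 - r^{k-1})(1 - r^{N-k}) / ((1-r)(1 - r^N)). -/
open Finset

private lemma hne {r : ℝ} (h0 : 0 < r) (h1 : r < 1) (m : ℕ) : 1 - r ^ (m + 1) ≠ 0 := by
  have : r ^ (m + 1) < 1 := pow_lt_one₀ h0.le h1 (Nat.succ_ne_zero m)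
  linarith

private lemma prod_formula {r : ℝ} (h0 : 0 < r) (h1 : r < 1) (j n : ℕ) (hn : j + 1 ≤ n) :
    ∏ i ∈ Finset.Icc (j + 1) n, r * (1 - r ^ (i - 1)) / (1 - r ^ (i + 1)) =
      r ^ (n + 1) * (1 - r ^ j) * (1 - r ^ (j + 1)) /
        (r ^ (j + 1) * (1 - r ^ n) * (1 - r ^ (n + 1))) := by
  induction n with
  | zero => omega
  | succ n ih =>
    rcases Nat.lt_or_ge (j + 1) (n + 1) with h | h
    · have hjn : j + 1 ≤ n := by omega
      rw [Finset.prod_Icc_succ_top (by omega), ih hjn]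
      have e1 := hne h0 h1 j
      have e2 : 1 - r ^ n ≠ 0 := by
        obtain ⟨d, rfl⟩ : ∃ d, n = d + 1 := ⟨n - 1, by omega⟩
        exact hne h0 h1 d
      have e3 := hne h0 h1 n
      have e4 := hne h0 h1 (n + 1)
      have e5 : r ≠ 0 := ne_of_gt h0
      have hnn : (n + 1) - 1 = n := by omega
      rw [hnn]
      field_simp
      ring
    · have hje : n = j := by omega
      subst hje
      rw [Finset.Icc_self, Finset.prod_singleton]
      have e1 := hne h0 h1 n
      have e3 := hne h0 h1 (n + 1)
      have e5 : r ≠ 0 := ne_of_gt h0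
      have hnn : (n + 1) - 1 = n := by omega
      rw [hnn]
      field_simp
      ring

private lemma sum_formula {r : ℝ} (h0 : 0 < r) (h1 : r < 1) (j m : ℕ) :
    ∑ n ∈ Finset.Icc (j + 1) (j + 1 + m), ∏ i ∈ Finset.Icc (j + 1) n,
        r * (1 - r ^ (i - 1)) / (1 - r ^ (i + 1)) =
      r * (1 - r ^ j) * (1 - r ^ (m + 1)) / ((1 - r) * (1 - r ^ (j + m + 2))) := by
  induction m with
  | zero =>
    rw [Nat.add_zero, Finset.Icc_self, Finset.sum_singleton, Finset.Icc_self,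
      Finset.prod_singleton]
    have e1 : 1 - r ^ (j + 0 + 2) ≠ 0 := by
      have := hne h0 h1 (j + 1)
      rwa [show j + 1 + 1 = j + 0 + 2 from by omega] at this
    have e2 : 1 - r ≠ 0 := by have := hne h0 h1 0; simpa using this
    have hk : (j + 1) - 1 = j := by omega
    have hk2 : j + 1 + 1 = j + 0 + 2 := by omega
    rw [hk, hk2]
    field_simp
    ring
  | succ m ih =>
    rw [show j + 1 + (m + 1) = (j + 1 + m) + 1 from rfl,
      Finset.sum_Icc_succ_top (by omega), ih,
      prod_formula h0 h1 j (j + 1 + m + 1) (by omega)]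
    have eA : 1 - r ^ (j + 1 + m + 1) ≠ 0 := hne h0 h1 (j + 1 + m)
    have eB : 1 - r ^ (j + 1 + m + 1 + 1) ≠ 0 := hne h0 h1 (j + 1 + m + 1)
    have eC : 1 - r ^ (j + m + 2) ≠ 0 := by
      have := hne h0 h1 (j + m + 1)
      rwa [show j + m + 1 + 1 = j + m + 2 from by omega] at this
    have eD : 1 - r ^ (j + (m + 1) + 2) ≠ 0 := by
      have := hne h0 h1 (j + m + 2)
      rwa [show j + m + 2 + 1 = j + (m + 1) + 2 from by omega] at this
    have e3 : 1 - r ≠ 0 := by have := hne h0 h1 0; simpa using this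
    have e5 : r ≠ 0 := ne_of_gt h0
    field_simp
    ring

/-- For the gambler's ruin chain with right-jump probability `p > 1/2` and
`r = (1-p)/p`, conditioned on absorption at `N`, the expected number of left-jumps
from state `k` before absorption starting from `x ≤ k ≤ N-1`, given by the
branching-process sum `Σ_{n=k}^{N-1} Π_{i=k}^{n} (p^A_{i,i-1}/p^A_{i,i+1})`
with `p^A_{i,i-1}/p^A_{i,i+1} = r(1-r^{i-1})/(1-r^{i+1})`, equals
`r(1 - r^{k-1})(1 - r^{N-k}) / ((1-r)(1 - r^N))`. -/
theorem stmt_11 (p : ℝ) (hp : 1 / 2 < p) (hp1 : p < 1) (r : ℝ) (hr : r = (1 - p) / p)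
    (N x k : ℕ) (hx : 1 ≤ x) (hxk : x ≤ k) (hkN : k ≤ N - 1) (hN : 1 ≤ N) :
    ∑ n ∈ Finset.Icc k (N - 1), ∏ i ∈ Finset.Icc k n,
        r * (1 - r ^ (i - 1)) / (1 - r ^ (i + 1)) =
      r * (1 - r ^ (k - 1)) * (1 - r ^ (N - k)) / ((1 - r) * (1 - r ^ N)) := by
  have hp0 : 0 < p := by linarith
  have h0 : 0 < r := by rw [hr]; apply div_pos (by linarith) hp0
  have h1 : r < 1 := by rw [hr, div_lt_one hp0]; linarith
  obtain ⟨j, rfl⟩ : ∃ j, k = j + 1 := ⟨k - 1, by omega⟩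
  obtain ⟨m, rfl⟩ : ∃ m, N = j + m + 2 := ⟨N - j - 2, by omega⟩
  have h1' : j + m + 2 - 1 = j + 1 + m := by omega
  have h2' : (j + 1) - 1 = j := by omega
  have h3' : j + m + 2 - (j + 1) = m + 1 := by omega
  rw [h1', h2', h3', sum_formula h0 h1 j m]
end

section
/- For the gambler's ruin chain on {0,...,N} with right-jump probability p > 1/2 and r = (1-p)/p, the expected number of visits to any state k (1 ≤ k ≤ N-1) before absorption, conditioned on absorption at N and starting from x ≤ k, equals ((1+r)/(1-r)) · (1-r^{N-k})(1-r^k)/(1-r^N), and is therefore bounded by (1+r)/(1-r) uniformly in k, x, and N. -/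
/-- For the gambler's ruin chain on `{0,…,N}` with right-jump probability `p > 1/2`
and `r = (1-p)/p`, the expected number of visits to state `k` (`1 ≤ k ≤ N-1`)
before absorption, conditioned on absorption at `N` and starting from `x ≤ k`,
equals `1 + E_x[ζ_k] + E_x[ζ_{k+1}]` where
`E_x[ζ_k] = r(1-r^{k-1})(1-r^{N-k})/((1-r)(1-r^N))`; it equals
`((1+r)/(1-r))·(1-r^{N-k})(1-r^k)/(1-r^N)` and is therefore bounded by
`(1+r)/(1-r)` uniformly in `k`, `x`, and `N`. -/
theorem stmt_12 (p : ℝ) (hp : 1 / 2 < p) (hp1 : p < 1) (r : ℝ) (hr : r = (1 - p) / p)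
    (N x k : ℕ) (hx : 1 ≤ x) (hxk : x ≤ k) (hk : 1 ≤ k) (hkN : k ≤ N - 1) (hN : 1 ≤ N)
    (ζ : ℕ → ℝ)
    (hζ : ∀ m, ζ m = r * (1 - r ^ (m - 1)) * (1 - r ^ (N - m)) / ((1 - r) * (1 - r ^ N))) :
    1 + ζ k + ζ (k + 1) =
        ((1 + r) / (1 - r)) * ((1 - r ^ (N - k)) * (1 - r ^ k) / (1 - r ^ N)) ∧
      1 + ζ k + ζ (k + 1) ≤ (1 + r) / (1 - r) := by
  have hp0 : 0 < p := lt_trans (by norm_num) hp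
  have hr0 : 0 < r := by
    rw [hr]; exact div_pos (by linarith) hp0
  have hr1 : r < 1 := by
    rw [hr, div_lt_one hp0]; linarith
  obtain ⟨a, rfl⟩ : ∃ a, k = a + 1 := ⟨k - 1, by omega⟩
  obtain ⟨b, rfl⟩ : ∃ b, N = a + 1 + b + 1 := ⟨N - a - 2, by omega⟩
  have hrN : r ^ (a + 1 + b + 1) < 1 := pow_lt_one₀ (le_of_lt hr0) hr1 (by omega)
  have h1 : (1 : ℝ) - r ≠ 0 := by linarith
  have h2 : (1 : ℝ) - r ^ (a + 1 + b + 1) ≠ 0 := by linarith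
  have hsub1 : a + 1 - 1 = a := by omega
  have hsub2 : a + 1 + b + 1 - (a + 1) = b + 1 := by omega
  have hsub3 : a + 1 + 1 - 1 = a + 1 := by omega
  have hsub4 : a + 1 + b + 1 - (a + 1 + 1) = b := by omega
  have heq : 1 + ζ (a + 1) + ζ (a + 1 + 1) =
      ((1 + r) / (1 - r)) *
        ((1 - r ^ (a + 1 + b + 1 - (a + 1))) * (1 - r ^ (a + 1)) / (1 - r ^ (a + 1 + b + 1))) := by
    rw [hζ, hζ, hsub1, hsub2, hsub3, hsub4]
    field_simp
    ring
  refine ⟨heq, ?_⟩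
  rw [heq]
  have hA : (0 : ℝ) < 1 - r ^ (a + 1 + b + 1) := by linarith
  have hfac : (1 - r ^ (a + 1 + b + 1 - (a + 1))) * (1 - r ^ (a + 1)) / (1 - r ^ (a + 1 + b + 1)) ≤ 1 := by
    rw [div_le_one hA, hsub2]
    have e1 : r ^ (a + 1 + b + 1) ≤ r ^ (b + 1) :=
      pow_le_pow_of_le_one (le_of_lt hr0) (le_of_lt hr1) (by omega)
    have e2 : r ^ (a + 1 + b + 1) ≤ r ^ (a + 1) :=
      pow_le_pow_of_le_one (le_of_lt hr0) (le_of_lt hr1) (by omega)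
    have hm : r ^ (a + 1 + b + 1) = r ^ (b + 1) * r ^ (a + 1) := by
      rw [← pow_add]; ring_nf
    nlinarith
  have hfac0 : 0 ≤ (1 - r ^ (a + 1 + b + 1 - (a + 1))) * (1 - r ^ (a + 1)) / (1 - r ^ (a + 1 + b + 1)) := by
    rw [hsub2]
    have e1 : r ^ (b + 1) < 1 := pow_lt_one₀ (le_of_lt hr0) hr1 (by omega)
    have e2 : r ^ (a + 1) < 1 := pow_lt_one₀ (le_of_lt hr0) hr1 (by omega)
    exact div_nonneg (mul_nonneg (by linarith) (by linarith)) (le_of_lt hA)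
  have hpos : 0 < (1 + r) / (1 - r) := div_pos (by linarith) (by linarith)
  calc ((1 + r) / (1 - r)) * ((1 - r ^ (a + 1 + b + 1 - (a + 1))) * (1 - r ^ (a + 1)) / (1 - r ^ (a + 1 + b + 1)))
      ≤ ((1 + r) / (1 - r)) * 1 := by
        exact mul_le_mul_of_nonneg_left hfac (le_of_lt hpos)
    _ = (1 + r) / (1 - r) := mul_one _
end

section
/- For the biased voter model on the complete graph with update probabilities q_0 > q_1 > 0, the mean time to consensus starting with ⌊αN⌋ agents of opinion 1 (α ∈ (0,1)) is Θ(log N): it is bounded below by (1/(q_0+q_1)) log(N(α ∧ (1-α))) and bounded above by (2/(q_0+q_1))·((1+r)/(1-r))·(log(N-1)+1), where r = q_1/q_0. -/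
/-!
With `voterOp q₀ q₁ v k = (q₀ + q₁) v k - q₀ v (k + 1) - q₁ v (k - 1)`, the mean consensus time
solves `voterOp q₀ q₁ t k = N / (k (N - k)) = 1 / k + 1 / (N - k)` on `(0, N)` with zero boundary
values, and `voterOp` obeys a minimum principle, so `t` is squeezed between a sub- and a
supersolution.

Lower bound: `log (min (k + 1) (N + 1 - k)) / (q₀ + q₁)` is a subsolution, since its steps to the
left and to the right are at most `1 / k` and `1 / (N - k)`.

Upper bound: `t` lies below the solution of the same equation with a reflecting barrier at `0`.
Its increments `g` satisfy `q₀ g (k + 1) = c (k + 1) + q₁ g k`, and summing this recursion gives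
`(q₀ - q₁) ∑ g ≤ ∑ c = 2 H_{N-1}`.
-/

open Finset

def voterOp (q₀ q₁ : ℝ) (v : ℕ → ℝ) (k : ℕ) : ℝ :=
  (q₀ + q₁) * v k - q₀ * v (k + 1) - q₁ * v (k - 1)

theorem le_of_voterOp_le {q₀ q₁ : ℝ} (hq₀ : 0 < q₀) (hq₁ : 0 ≤ q₁) {N : ℕ} {v w : ℕ → ℝ}
    (h0 : w 0 ≤ v 0) (hN : w N ≤ v N)
    (hop : ∀ k, 0 < k → k < N → voterOp q₀ q₁ w k ≤ voterOp q₀ q₁ v k) :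
    ∀ k ≤ N, w k ≤ v k := by
  set u := fun k => v k - w k
  obtain ⟨m₀, hm₀, hmin⟩ := (range (N + 1)).exists_min_image u nonempty_range_add_one
  -- the largest minimiser of `u` cannot be interior: to its right `u` is strictly larger
  obtain ⟨m, hm, hmax⟩ := ((range (N + 1)).filter (u · = u m₀)).exists_max_image id
    ⟨m₀, mem_filter.2 ⟨hm₀, rfl⟩⟩
  simp only [mem_filter, mem_range, id] at hm hmax
  have hmin' : ∀ k ≤ N, u m ≤ u k := fun k hk => hm.2 ▸ hmin k (mem_range.2 (by omega))
  suffices 0 ≤ u m from fun k hk => sub_nonneg.1 (this.trans (hmin' k hk))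
  by_contra! hneg
  have hm0 : 0 < m := Nat.pos_of_ne_zero fun h => by simp only [u, h] at hneg; linarith
  have hmN : m < N := lt_of_le_of_ne (by omega) fun h => by simp only [u, h] at hneg; linarith
  have hright : u m < u (m + 1) :=
    lt_of_le_of_ne (hmin' _ hmN) fun h => by have := hmax (m + 1) ⟨by omega, h ▸ hm.2⟩; omega
  have hleft : u m ≤ u (m - 1) := hmin' _ (by omega)
  have := hop m hm0 hmN
  simp only [voterOp, u] at this hright hleft
  nlinarith

/-- `(q₀ + q₁)` times the mean holding time `N / ((q₀ + q₁) k (N - k))` in state `k`. -/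
noncomputable def scaledHoldingTime (N k : ℕ) : ℝ := N / (k * (N - k))

theorem scaledHoldingTime_eq {N k : ℕ} (hk : 0 < k) (hkN : k < N) :
    scaledHoldingTime N k = 1 / k + 1 / (N - k) := by
  have hk' : (0 : ℝ) < k := by exact_mod_cast hk
  have hkN' : (0 : ℝ) < N - k := sub_pos.2 (by exact_mod_cast hkN)
  rw [scaledHoldingTime]
  field_simp
  ring

theorem scaledHoldingTime_pos {N k : ℕ} (hk : 0 < k) (hkN : k < N) :
    0 < scaledHoldingTime N k := by
  have hkN' : (0 : ℝ) < N - k := sub_pos.2 (by exact_mod_cast hkN)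
  rw [scaledHoldingTime_eq hk hkN]
  positivity

theorem sum_scaledHoldingTime (n : ℕ) :
    ∑ j ∈ range n, scaledHoldingTime (n + 1) (j + 1) = 2 * harmonic n := by
  have hreflect : ∑ j ∈ range n, 1 / ((n : ℝ) - j) = ∑ j ∈ range n, 1 / ((j : ℝ) + 1) := by
    rw [← sum_range_reflect (fun j => 1 / ((j : ℝ) + 1))]
    refine sum_congr rfl fun j hj => ?_
    have hj := mem_range.1 hj
    rw [Nat.sub_sub, Nat.cast_sub (by omega)]
    push_cast
    ring
  have hterm : ∀ j ∈ range n,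
      scaledHoldingTime (n + 1) (j + 1) = 1 / ((j : ℝ) + 1) + 1 / ((n : ℝ) - j) := by
    intro j hj
    rw [scaledHoldingTime_eq j.succ_pos (by simpa using hj)]
    push_cast
    ring
  rw [sum_congr rfl hterm, sum_add_distrib, hreflect, harmonic]
  push_cast
  simp only [one_div]
  ring

noncomputable def logBarrier (N k : ℕ) : ℝ := min (Real.log (k + 1)) (Real.log (N + 1 - k))

theorem Real.log_add_one_le_log_add_one_div {x : ℝ} (hx : 0 < x) :
    Real.log (x + 1) ≤ Real.log x + 1 / x := by
  have := Real.log_le_sub_one_of_pos (show 0 < (x + 1) / x by positivity)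
  rw [Real.log_div (by positivity) hx.ne', add_div, div_self hx.ne'] at this
  linarith

theorem logBarrier_le_pred {N k : ℕ} (hk : 0 < k) (hkN : k ≤ N) :
    logBarrier N k ≤ logBarrier N (k - 1) + 1 / k := by
  have hk' : (0 : ℝ) < k := by exact_mod_cast hk
  have hkN' : (k : ℝ) ≤ N := by exact_mod_cast hkN
  rw [logBarrier, logBarrier, ← min_add_add_right, Nat.cast_pred hk, sub_add_cancel]
  refine min_le_min (Real.log_add_one_le_log_add_one_div hk') ?_
  have := Real.log_le_log (by linarith) (show (N : ℝ) + 1 - k ≤ N + 1 - (k - 1) by linarith)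
  have : 0 ≤ 1 / (k : ℝ) := by positivity
  linarith

theorem logBarrier_le_succ {N k : ℕ} (hkN : k < N) :
    logBarrier N k ≤ logBarrier N (k + 1) + 1 / (N - k) := by
  have hkN' : (0 : ℝ) < N - k := sub_pos.2 (by exact_mod_cast hkN)
  rw [logBarrier, logBarrier, ← min_add_add_right, Nat.cast_succ]
  refine min_le_min ?_ ?_
  · have := Real.log_le_log (by positivity) (show (k : ℝ) + 1 ≤ k + 1 + 1 by linarith)
    have : 0 ≤ 1 / ((N : ℝ) - k) := by positivity
    linarith
  · have := Real.log_add_one_le_log_add_one_div hkN'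
    rw [show (N : ℝ) + 1 - (k + 1) = N - k by ring, show (N : ℝ) + 1 - k = N - k + 1 by ring]
    linarith

theorem voterOp_logBarrier_le {q₀ q₁ : ℝ} (hq₀ : 0 ≤ q₀) (hq₁ : 0 ≤ q₁) {N k : ℕ}
    (hk : 0 < k) (hkN : k < N) :
    voterOp q₀ q₁ (logBarrier N) k ≤ (q₀ + q₁) * scaledHoldingTime N k := by
  have hk' : (0 : ℝ) < k := by exact_mod_cast hk
  have hkN' : (0 : ℝ) < N - k := sub_pos.2 (by exact_mod_cast hkN)
  calc voterOp q₀ q₁ (logBarrier N) k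
      = q₀ * (logBarrier N k - logBarrier N (k + 1))
        + q₁ * (logBarrier N k - logBarrier N (k - 1)) := by rw [voterOp]; ring
    _ ≤ q₀ * (1 / (N - k)) + q₁ * (1 / k) := by
      gcongr
      · linarith [logBarrier_le_succ hkN]
      · linarith [logBarrier_le_pred hk hkN.le]
    _ ≤ (q₀ + q₁) * scaledHoldingTime N k := by
      have : 0 ≤ q₀ * (1 / k) + q₁ * (1 / (N - k)) := by positivity
      rw [scaledHoldingTime_eq hk hkN]
      linarith

noncomputable def reflectedIncrement (q₀ q₁ : ℝ) (c : ℕ → ℝ) : ℕ → ℝ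
  | 0 => 0
  | j + 1 => (c (j + 1) + q₁ * reflectedIncrement q₀ q₁ c j) / q₀

noncomputable def reflectedSolution (q₀ q₁ : ℝ) (c : ℕ → ℝ) (N k : ℕ) : ℝ :=
  ∑ j ∈ Ico k N, reflectedIncrement q₀ q₁ c j

theorem voterOp_reflectedSolution {q₀ q₁ : ℝ} (hq₀ : q₀ ≠ 0) (c : ℕ → ℝ) {N k : ℕ}
    (hk : 0 < k) (hkN : k < N) :
    voterOp q₀ q₁ (reflectedSolution q₀ q₁ c N) k = c k := by
  obtain ⟨j, rfl⟩ : ∃ j, k = j + 1 := ⟨k - 1, by omega⟩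
  rw [voterOp, reflectedSolution, reflectedSolution, reflectedSolution, Nat.add_sub_cancel,
    sum_eq_sum_Ico_succ_bot (show j < N by omega), sum_eq_sum_Ico_succ_bot hkN,
    reflectedIncrement]
  field_simp
  ring

theorem reflectedIncrement_nonneg {q₀ q₁ : ℝ} (hq₀ : 0 < q₀) (hq₁ : 0 ≤ q₁) {c : ℕ → ℝ} {n : ℕ}
    (hc : ∀ j, 0 < j → j ≤ n → 0 ≤ c j) : ∀ j ≤ n, 0 ≤ reflectedIncrement q₀ q₁ c j
  | 0, _ => le_rfl
  | j + 1, hj => by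
    have := reflectedIncrement_nonneg hq₀ hq₁ hc j (by omega)
    have := hc (j + 1) j.succ_pos hj
    rw [reflectedIncrement]
    positivity

theorem sub_mul_sum_reflectedIncrement_le {q₀ q₁ : ℝ} (hq₀ : q₀ ≠ 0) (hq₁ : 0 ≤ q₁)
    {c : ℕ → ℝ} {n : ℕ} (hn : 0 ≤ reflectedIncrement q₀ q₁ c n) :
    (q₀ - q₁) * ∑ j ∈ range (n + 1), reflectedIncrement q₀ q₁ c j
      ≤ ∑ j ∈ range n, c (j + 1) := by
  have hsum : q₀ * ∑ j ∈ range (n + 1), reflectedIncrement q₀ q₁ c j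
      = ∑ j ∈ range n, c (j + 1) + q₁ * ∑ j ∈ range n, reflectedIncrement q₀ q₁ c j := by
    simp only [sum_range_succ', reflectedIncrement, add_zero, mul_sum, ← sum_add_distrib]
    exact sum_congr rfl fun j _ => by field_simp
  rw [sum_range_succ] at hsum ⊢
  nlinarith

structure IsMeanConsensusTime (q₀ q₁ : ℝ) (N : ℕ) (t : ℕ → ℝ) : Prop where
  apply_zero : t 0 = 0
  apply_N : t N = 0
  voterOp_eq : ∀ k, 0 < k → k < N → voterOp q₀ q₁ t k = scaledHoldingTime N k

namespace IsMeanConsensusTime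

variable {q₀ q₁ : ℝ} {N : ℕ} {t : ℕ → ℝ}

theorem logBarrier_div_le (ht : IsMeanConsensusTime q₀ q₁ N t) (hq₀ : 0 < q₀) (hq₁ : 0 ≤ q₁)
    {k : ℕ} (hk : k ≤ N) : logBarrier N k / (q₀ + q₁) ≤ t k := by
  have hq : 0 < q₀ + q₁ := add_pos_of_pos_of_nonneg hq₀ hq₁
  refine le_of_voterOp_le (w := fun k => logBarrier N k / (q₀ + q₁)) (v := t) hq₀ hq₁ ?_ ?_
    (fun j hj hjN => ?_) k hk
  · simpa [logBarrier, ht.apply_zero] using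
      div_nonpos_of_nonpos_of_nonneg (min_le_left _ _) hq.le
  · simpa [logBarrier, ht.apply_N] using
      div_nonpos_of_nonpos_of_nonneg (min_le_right _ _) hq.le
  · rw [ht.voterOp_eq j hj hjN]
    calc voterOp q₀ q₁ (fun k => logBarrier N k / (q₀ + q₁)) j
        = voterOp q₀ q₁ (logBarrier N) j / (q₀ + q₁) := by simp only [voterOp]; ring
      _ ≤ scaledHoldingTime N j := by
        rw [div_le_iff₀ hq, mul_comm]
        exact voterOp_logBarrier_le hq₀.le hq₁ hj hjN

theorem le_harmonic_div (ht : IsMeanConsensusTime q₀ q₁ N t) (hq : q₁ < q₀) (hq₁ : 0 ≤ q₁)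
    {k : ℕ} (hk : k ≤ N) : t k ≤ 2 * harmonic (N - 1) / (q₀ - q₁) := by
  have hq₀ : 0 < q₀ := hq₁.trans_lt hq
  obtain _ | n := N
  · simp [Nat.le_zero.1 hk, ht.apply_zero]
  set c := scaledHoldingTime (n + 1)
  set v := reflectedSolution q₀ q₁ c (n + 1)
  have hg : ∀ j ≤ n, 0 ≤ reflectedIncrement q₀ q₁ c j :=
    reflectedIncrement_nonneg hq₀ hq₁ fun j hj hjn => (scaledHoldingTime_pos hj (by omega)).le
  have htv : t k ≤ v k := by
    refine le_of_voterOp_le hq₀ hq₁ (w := t) (v := v) ?_ ?_ (fun j hj hjN => ?_) k hk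
    · rw [ht.apply_zero]
      exact sum_nonneg fun j hj => hg j (by simp at hj; omega)
    · simp [v, reflectedSolution, ht.apply_N]
    · rw [ht.voterOp_eq j hj hjN, voterOp_reflectedSolution hq₀.ne' c hj hjN]
  have hv : v k ≤ v 0 :=
    sum_le_sum_of_subset_of_nonneg (Ico_subset_Ico_left (Nat.zero_le k))
      fun j hj _ => hg j (by simp at hj; omega)
  have hv0 : (q₀ - q₁) * v 0 ≤ 2 * harmonic n := by
    have hv0_eq : v 0 = ∑ j ∈ range (n + 1), reflectedIncrement q₀ q₁ c j := by
      rw [range_eq_Ico]; rfl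
    rw [← sum_scaledHoldingTime, hv0_eq]
    exact sub_mul_sum_reflectedIncrement_le hq₀.ne' hq₁ (hg n le_rfl)
  rw [Nat.add_sub_cancel, le_div_iff₀ (sub_pos.2 hq)]
  nlinarith

end IsMeanConsensusTime

theorem stmt_13_general (q₀ q₁ : ℝ) (hq : q₀ > q₁) (hq₁ : q₁ > 0) (r : ℝ) (hr : r = q₁ / q₀)
    (α : ℝ) (hα : α ∈ Set.Ioo (0 : ℝ) 1) (N : ℕ)
    (hfloor : 1 ≤ ⌊α * N⌋₊ ∧ ⌊α * N⌋₊ ≤ N - 1)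
    (t : ℕ → ℝ) (ht0 : t 0 = 0) (htN : t N = 0)
    (hrec : ∀ k, 1 ≤ k → k ≤ N - 1 →
      t k = N / ((q₀ + q₁) * k * (N - k))
            + (q₀ / (q₀ + q₁)) * t (k + 1) + (q₁ / (q₀ + q₁)) * t (k - 1)) :
    (1 / (q₀ + q₁)) * Real.log (N * min α (1 - α)) ≤ t ⌊α * N⌋₊ ∧
      t ⌊α * N⌋₊ ≤ (2 / (q₀ + q₁)) * ((1 + r) / (1 - r)) * (Real.log (N - 1) + 1) := by
  obtain ⟨hα₀, hα₁⟩ := hα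
  have hq₀ : 0 < q₀ := hq₁.trans hq
  have hs : 0 < q₀ + q₁ := add_pos hq₀ hq₁
  have ht : IsMeanConsensusTime q₀ q₁ N t := by
    refine ⟨ht0, htN, fun k hk hkN => ?_⟩
    have hk' : (0 : ℝ) < k := by exact_mod_cast hk
    have hkN' : (0 : ℝ) < N - k := sub_pos.2 (by exact_mod_cast hkN)
    rw [voterOp, scaledHoldingTime, hrec k hk (by omega)]
    field_simp
    ring
  set k₀ := ⌊α * N⌋₊
  have hk₀ : k₀ ≤ N := by omega
  constructor
  · have hN₀ : (0 : ℝ) < N := by exact_mod_cast (by omega : 0 < N)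
    have hmin : 0 < N * min α (1 - α) := mul_pos hN₀ (lt_min hα₀ (by linarith))
    have hfl₁ : (k₀ : ℝ) ≤ α * N := Nat.floor_le (by positivity)
    have hfl₂ : α * N < k₀ + 1 := Nat.lt_floor_add_one _
    have hlog : Real.log (N * min α (1 - α)) ≤ logBarrier N k₀ :=
      le_min (Real.log_le_log hmin (by nlinarith [min_le_left α (1 - α)]))
        (Real.log_le_log hmin (by nlinarith [min_le_right α (1 - α)]))
    calc 1 / (q₀ + q₁) * Real.log (N * min α (1 - α)) ≤ logBarrier N k₀ / (q₀ + q₁) := by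
          rw [one_div_mul_eq_div]
          gcongr
      _ ≤ t k₀ := ht.logBarrier_div_le hq₀ hq₁.le hk₀
  · have hH := harmonic_le_one_add_log (N - 1)
    rw [Nat.cast_pred (by omega)] at hH
    calc t k₀ ≤ 2 * harmonic (N - 1) / (q₀ - q₁) := ht.le_harmonic_div hq hq₁.le hk₀
      _ ≤ 2 * (Real.log (N - 1) + 1) / (q₀ - q₁) := by gcongr; linarith
      _ = _ := by
        rw [hr]
        field_simp

/-- For the biased voter model on the complete graph with update probabilities
`q₀ > q₁ > 0` and `r = q₁/q₀`, the mean absorption (consensus) time `t`,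
characterized by `t 0 = t N = 0` and the first-step recurrence
`t k = N/((q₀+q₁)k(N-k)) + (q₀/(q₀+q₁)) t(k+1) + (q₁/(q₀+q₁)) t(k-1)`,
started from `⌊αN⌋` agents of opinion 1 (`α ∈ (0,1)`), is `Θ(log N)`:
it is at least `(1/(q₀+q₁)) log(N(α ∧ (1-α)))` and at most
`(2/(q₀+q₁))((1+r)/(1-r))(log(N-1)+1)`. -/
theorem stmt_13 (q₀ q₁ : ℝ) (hq : q₀ > q₁) (hq₁ : q₁ > 0) (r : ℝ) (hr : r = q₁ / q₀)
    (α : ℝ) (hα : α ∈ Set.Ioo (0 : ℝ) 1) (N : ℕ) (hN : 2 ≤ N)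
    (hfloor : 1 ≤ ⌊α * N⌋₊ ∧ ⌊α * N⌋₊ ≤ N - 1)
    (t : ℕ → ℝ) (ht0 : t 0 = 0) (htN : t N = 0)
    (hrec : ∀ k, 1 ≤ k → k ≤ N - 1 →
      t k = N / ((q₀ + q₁) * k * (N - k))
            + (q₀ / (q₀ + q₁)) * t (k + 1) + (q₁ / (q₀ + q₁)) * t (k - 1)) :
    (1 / (q₀ + q₁)) * Real.log (N * min α (1 - α)) ≤ t ⌊α * N⌋₊ ∧
      t ⌊α * N⌋₊ ≤ (2 / (q₀ + q₁)) * ((1 + r) / (1 - r)) * (Real.log (N - 1) + 1) :=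
  stmt_13_general q₀ q₁ hq hq₁ r hr α hα N hfloor t ht0 htN hrec
end
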